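/- arXiv:1210.5719 — 4 statements merged into one kernel-verified Lean document; each statement's English description precedes it below -/
import Mathlib

section
/- For every real α ≥ 2, ∫_{ℝ²} 2α² |y|^{α-2}/(1+|y|^α)² · (1-|y|^α)/(1+|y|^α) dy = 0. -/
/-!
In polar coordinates the integral is a multiple of `∫₀^∞ r^(α-1) (1 - r^α) / (1 + r^α)^3 dr`.
The substitution `u = r^α` turns this into a multiple of `∫₀^∞ (1 - u) / (1 + u)^3 du`, which
vanishes because `u / (1 + u)^2 = (1 + u)⁻¹ - (1 + u)⁻²` is an antiderivative that is `0` both at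
`0` and at `∞`.
-/

open Real MeasureTheory Filter Set Topology

theorem integral_Ioi_one_sub_div_one_add_pow_three :
    ∫ u in Ioi (0 : ℝ), (1 - u) / (1 + u) ^ 3 = 0 := by
  set F : ℝ → ℝ := fun u ↦ (1 + u)⁻¹ - ((1 + u) ^ 2)⁻¹
  have hderiv : ∀ u ∈ Ici (0 : ℝ), HasDerivAt F ((1 - u) / (1 + u) ^ 3) u := by
    intro u (hu : 0 ≤ u)
    have hpos : (0 : ℝ) < 1 + u := by linarith
    have h := (hasDerivAt_id' u).const_add 1
    refine ((h.inv hpos.ne').sub ((h.pow 2).inv (pow_ne_zero 2 hpos.ne'))).congr_deriv ?_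
    simp only [Pi.pow_apply]
    field_simp
    ring
  have hint : IntegrableOn (fun u : ℝ ↦ (1 - u) / (1 + u) ^ 3) (Ioi 0) := by
    refine integrable_inv_one_add_sq.integrableOn.mono'
      (Measurable.aestronglyMeasurable (by fun_prop)) ?_
    filter_upwards [ae_restrict_mem measurableSet_Ioi] with u (hu : 0 < u)
    rw [Real.norm_eq_abs, abs_div, abs_of_pos (by positivity : (0 : ℝ) < (1 + u) ^ 3),
      div_le_iff₀ (by positivity), inv_mul_eq_div, le_div_iff₀ (by positivity)]
    nlinarith [abs_le.mpr (⟨by linarith, by linarith⟩ : -(1 + u) ≤ 1 - u ∧ 1 - u ≤ 1 + u),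
      abs_nonneg (1 - u)]
  have hlim : Tendsto F atTop (𝓝 0) := by
    have h : Tendsto (fun u : ℝ ↦ (1 + u)⁻¹) atTop (𝓝 0) :=
      tendsto_inv_atTop_zero.comp (tendsto_atTop_add_const_left _ 1 tendsto_id)
    simpa [F] using h.sub (h.pow 2)
  rw [integral_Ioi_of_hasDerivAt_of_tendsto' hderiv hint hlim]
  norm_num [F]

theorem integral_Ioi_rpow_sub_one_mul_one_sub_div_one_add_pow_three (α : ℝ) :
    ∫ r in Ioi (0 : ℝ), r ^ (α - 1) * ((1 - r ^ α) / (1 + r ^ α) ^ 3) = 0 := by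
  rcases eq_or_ne α 0 with rfl | hα
  · simp
  have h := integral_comp_rpow_Ioi (fun u : ℝ ↦ (1 - u) / (1 + u) ^ 3) hα
  simp only [smul_eq_mul, mul_assoc, integral_const_mul,
    integral_Ioi_one_sub_div_one_add_pow_three] at h
  simpa [hα] using h

theorem stmt2_general (α : ℝ) :
    ∫ y : EuclideanSpace ℝ (Fin 2),
      2 * α ^ 2 * ‖y‖ ^ (α - 2) / (1 + ‖y‖ ^ α) ^ 2 * ((1 - ‖y‖ ^ α) / (1 + ‖y‖ ^ α)) = 0 := by
  rw [integral_fun_norm_addHaar volume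
    (fun r ↦ 2 * α ^ 2 * r ^ (α - 2) / (1 + r ^ α) ^ 2 * ((1 - r ^ α) / (1 + r ^ α)))]
  have hradial : ∀ r ∈ Ioi (0 : ℝ),
      r ^ (2 - 1) • (2 * α ^ 2 * r ^ (α - 2) / (1 + r ^ α) ^ 2 * ((1 - r ^ α) / (1 + r ^ α)))
        = 2 * α ^ 2 * (r ^ (α - 1) * ((1 - r ^ α) / (1 + r ^ α) ^ 3)) := by
    intro r (hr : 0 < r)
    rw [show α - 1 = 1 + (α - 2) by ring, rpow_add hr, rpow_one]
    simp only [Nat.add_one_sub_one, pow_one, smul_eq_mul]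
    field_simp
  rw [finrank_euclideanSpace_fin, setIntegral_congr_fun measurableSet_Ioi hradial,
    integral_const_mul, integral_Ioi_rpow_sub_one_mul_one_sub_div_one_add_pow_three]
  simp

theorem stmt2 (α : ℝ) (hα : 2 ≤ α) :
    ∫ y : EuclideanSpace ℝ (Fin 2),
      2 * α ^ 2 * ‖y‖ ^ (α - 2) / (1 + ‖y‖ ^ α) ^ 2 * ((1 - ‖y‖ ^ α) / (1 + ‖y‖ ^ α)) = 0 :=
  stmt2_general α
end

section
/- For every real α ≥ 2, ∫_{ℝ²} 2α² |y|^{α-2}/(1+|y|^α)² · (1-|y|^α)/(1+|y|^α) · ln((1+|y|^α)²) dy = -4πα. -/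
/-!
In polar coordinates the integral is `2π ∫₀^∞ r f(r) dr`. With `u = 1 + r ^ α`, the radial
integrand `r f(r)` is `4α` times the `r`-derivative of `H(u)`, where
`H(u) = log u (u⁻¹ - u⁻²) + u⁻¹ - u⁻² / 2` is a primitive of `log u (2 - u) / u³`.
Since `H(1) = 1/2` and `H(u) → 0` as `u → ∞`, the radial integral is `-2α`. The integrand is
nonnegative for `r < 1` and nonpositive for `r > 1`, which gives its integrability on `(0, ∞)`.
-/

open Real MeasureTheory Set Filter Topology

theorem integral_fun_norm_euclideanSpace_fin_two (f : ℝ → ℝ) :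
    ∫ y : EuclideanSpace ℝ (Fin 2), f ‖y‖ = 2 * π * ∫ r in Ioi (0 : ℝ), r * f r := by
  rw [integral_fun_norm_addHaar, finrank_euclideanSpace_fin, measureReal_def,
    EuclideanSpace.volume_ball_fin_two]
  simp [mul_assoc, pi_nonneg]

theorem integrableOn_Ioi_deriv_of_nonneg_of_nonpos {F g : ℝ → ℝ} {a b l : ℝ} (hab : a ≤ b)
    (hcont : ContinuousOn F (Ici a)) (hderiv : ∀ x ∈ Ioi a, HasDerivAt F (g x) x)
    (hpos : ∀ x ∈ Ioo a b, 0 ≤ g x) (hneg : ∀ x ∈ Ioi b, g x ≤ 0)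
    (hF : Tendsto F atTop (𝓝 l)) : IntegrableOn g (Ioi a) := by
  rw [← Ioc_union_Ioi_eq_Ioi hab]
  refine .union ?_ ?_
  · exact intervalIntegral.integrableOn_deriv_of_nonneg (hcont.mono Icc_subset_Ici_self)
      (fun x hx => hderiv x hx.1) hpos
  · exact integrableOn_Ioi_deriv_of_nonpos
      ((hcont.continuousWithinAt (mem_Ici.2 hab)).mono (Ici_subset_Ici.2 hab))
      (fun x hx => hderiv x (hab.trans_lt hx)) hneg hF

noncomputable def logPrimitive (u : ℝ) : ℝ :=
  log u * (u⁻¹ - (u ^ 2)⁻¹) + u⁻¹ - 2⁻¹ * (u ^ 2)⁻¹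

theorem hasDerivAt_logPrimitive {u : ℝ} (hu : 0 < u) :
    HasDerivAt logPrimitive (log u * (2 - u) / u ^ 3) u := by
  have hinv := hasDerivAt_inv hu.ne'
  have hinv2 := (hasDerivAt_pow 2 u).inv (pow_ne_zero 2 hu.ne')
  refine ((((hasDerivAt_log hu.ne').mul (hinv.sub hinv2)).add hinv).sub
    (hinv2.const_mul 2⁻¹)).congr_deriv ?_
  simp only [Pi.sub_apply, Pi.inv_apply]
  field_simp
  ring

theorem logPrimitive_one : logPrimitive 1 = 2⁻¹ := by
  norm_num [logPrimitive]

theorem tendsto_logPrimitive_atTop : Tendsto logPrimitive atTop (𝓝 0) := by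
  have hlog : Tendsto (fun u => log u * u⁻¹) atTop (𝓝 0) := by
    simpa [div_eq_mul_inv] using isLittleO_log_id_atTop.tendsto_div_nhds_zero
  have hinv : Tendsto (fun u : ℝ => u⁻¹) atTop (𝓝 0) := tendsto_inv_atTop_zero
  have := ((hlog.mul ((tendsto_const_nhds (x := (1 : ℝ))).sub hinv)).add hinv).sub
    ((hinv.mul hinv).const_mul 2⁻¹)
  simp only [mul_zero, sub_zero, add_zero, zero_mul] at this
  refine this.congr fun u => ?_
  simp only [logPrimitive, sq]
  ring

section OneAddRpow

variable {α : ℝ}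

theorem hasDerivAt_logPrimitive_one_add_rpow {r : ℝ} (hr : 0 < r) :
    HasDerivAt (fun r => logPrimitive (1 + r ^ α))
      (log (1 + r ^ α) * (1 - r ^ α) / (1 + r ^ α) ^ 3 * (α * r ^ (α - 1))) r := by
  have hu : 0 < 1 + r ^ α := by positivity
  refine ((hasDerivAt_logPrimitive hu).comp r
    ((hasDerivAt_rpow_const (Or.inl hr.ne')).const_add 1)).congr_deriv ?_
  ring

theorem continuousOn_logPrimitive_one_add_rpow (hα : 0 ≤ α) :
    ContinuousOn (fun r => logPrimitive (1 + r ^ α)) (Ici 0) := by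
  refine ContinuousOn.comp (t := Ioi 0)
    (fun u hu => (hasDerivAt_logPrimitive hu).continuousAt.continuousWithinAt)
    (continuous_const.add (continuous_rpow_const hα)).continuousOn
    (fun r hr => by have := rpow_nonneg (mem_Ici.1 hr) α; simp only [mem_Ioi]; positivity)

theorem tendsto_logPrimitive_one_add_rpow_atTop (hα : 0 < α) :
    Tendsto (fun r => logPrimitive (1 + r ^ α)) atTop (𝓝 0) :=
  tendsto_logPrimitive_atTop.comp
    (tendsto_atTop_add_const_left _ 1 (tendsto_rpow_atTop hα))

theorem integral_Ioi_deriv_logPrimitive_one_add_rpow (hα : 0 < α) :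
    ∫ r in Ioi (0 : ℝ), log (1 + r ^ α) * (1 - r ^ α) / (1 + r ^ α) ^ 3 * (α * r ^ (α - 1))
      = -2⁻¹ := by
  have hderiv : ∀ r ∈ Ioi (0 : ℝ), HasDerivAt (fun r => logPrimitive (1 + r ^ α))
      (log (1 + r ^ α) * (1 - r ^ α) / (1 + r ^ α) ^ 3 * (α * r ^ (α - 1))) r :=
    fun r hr => hasDerivAt_logPrimitive_one_add_rpow hr
  have hcont := continuousOn_logPrimitive_one_add_rpow hα.le
  have htop := tendsto_logPrimitive_one_add_rpow_atTop hα
  have hint : IntegrableOn (fun r => log (1 + r ^ α) * (1 - r ^ α) / (1 + r ^ α) ^ 3 *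
      (α * r ^ (α - 1))) (Ioi 0) := by
    refine integrableOn_Ioi_deriv_of_nonneg_of_nonpos zero_le_one hcont hderiv
      (fun r hr => ?_) (fun r hr => ?_) htop
    · have h1 : r ^ α ≤ 1 := rpow_le_one hr.1.le hr.2.le hα.le
      have h0 := rpow_nonneg hr.1.le α
      have h0' := rpow_nonneg hr.1.le (α - 1)
      have hlog : 0 ≤ log (1 + r ^ α) := log_nonneg (by linarith)
      have : 0 ≤ 1 - r ^ α := by linarith
      positivity
    · have h1 : 1 ≤ r ^ α := one_le_rpow (mem_Ioi.1 hr).le hα.le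
      have h0' := rpow_nonneg (zero_le_one.trans (mem_Ioi.1 hr).le) (α - 1)
      have hlog : 0 ≤ log (1 + r ^ α) := log_nonneg (by linarith)
      have : 0 ≤ r ^ α - 1 := by linarith
      rw [← neg_sub, mul_neg, neg_div, neg_mul]
      exact neg_nonpos.2 (by positivity)
  rw [integral_Ioi_of_hasDerivAt_of_tendsto (hcont 0 self_mem_Ici) hderiv hint htop,
    zero_rpow hα.ne', add_zero, logPrimitive_one, zero_sub]

end OneAddRpow

theorem stmt3 (α : ℝ) (hα : 2 ≤ α) :
    ∫ y : EuclideanSpace ℝ (Fin 2),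
      2 * α ^ 2 * ‖y‖ ^ (α - 2) / (1 + ‖y‖ ^ α) ^ 2 * ((1 - ‖y‖ ^ α) / (1 + ‖y‖ ^ α)) *
        Real.log ((1 + ‖y‖ ^ α) ^ 2) = -(4 * π * α) := by
  have hradial : ∀ r ∈ Ioi (0 : ℝ),
      r * (2 * α ^ 2 * r ^ (α - 2) / (1 + r ^ α) ^ 2 * ((1 - r ^ α) / (1 + r ^ α)) *
        log ((1 + r ^ α) ^ 2))
      = 4 * α * (log (1 + r ^ α) * (1 - r ^ α) / (1 + r ^ α) ^ 3 * (α * r ^ (α - 1))) := by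
    intro r hr
    have hu : 0 < 1 + r ^ α := by have := rpow_pos_of_pos hr α; positivity
    rw [log_pow, show α - 1 = α - 2 + 1 by ring, rpow_add_one (ne_of_gt hr)]
    field_simp
    ring
  rw [integral_fun_norm_euclideanSpace_fin_two (fun r => 2 * α ^ 2 * r ^ (α - 2) /
      (1 + r ^ α) ^ 2 * ((1 - r ^ α) / (1 + r ^ α)) * log ((1 + r ^ α) ^ 2)),
    setIntegral_congr_fun measurableSet_Ioi hradial, integral_const_mul,
    integral_Ioi_deriv_logPrimitive_one_add_rpow (by linarith)]
  ring
end

section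
/- For every real α ≥ 2, ∫_{ℝ²} 2α² |y|^{α-2}/(1+|y|^α)² · (1-|y|^α)/(1+|y|^α) · ln|y| dy = -4π. -/
/-!
In polar coordinates the integral is `2π ∫₀^∞ r f(r) dr`. Since `r ↦ r^α / (1 + r^α)²` has
derivative `α r^(α-1) (1 - r^α) / (1 + r^α)³`, the radial integrand `r f(r)` equals
`2α (r^α / (1 + r^α)²)' log r`, and one integration by parts gives the explicit primitive
`2 (α r^α log r / (1 + r^α)² + 1 / (1 + r^α))`. It decreases from `2` at `0` to `0` at `∞`,
so the radial integral is `-2`.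
-/

open Real MeasureTheory Set Filter Topology

noncomputable def radialProfile (α r : ℝ) : ℝ :=
  2 * α ^ 2 * r ^ (α - 2) / (1 + r ^ α) ^ 2 * ((1 - r ^ α) / (1 + r ^ α)) * log r

noncomputable def radialPrimitive (α r : ℝ) : ℝ :=
  2 * (α * r ^ α * log r / (1 + r ^ α) ^ 2 + (1 + r ^ α)⁻¹)

section

variable {α r : ℝ}

theorem hasDerivAt_radialPrimitive (hr : 0 < r) :
    HasDerivAt (radialPrimitive α) (r * radialProfile α r) r := by
  have hpow : HasDerivAt (fun x : ℝ => x ^ α) (α * r ^ (α - 1)) r :=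
    hasDerivAt_rpow_const (Or.inl hr.ne')
  have hden : HasDerivAt (fun x : ℝ => 1 + x ^ α) (α * r ^ (α - 1)) r := hpow.const_add 1
  have hpos : 0 < 1 + r ^ α := by positivity
  have hnum : HasDerivAt (fun x : ℝ => α * x ^ α * log x)
      (α * (α * r ^ (α - 1)) * log r + α * r ^ α * r⁻¹) r :=
    (hpow.const_mul α).mul (hasDerivAt_log hr.ne')
  have hden2 : HasDerivAt (fun x : ℝ => (1 + x ^ α) ^ 2)
      ((2 : ℕ) * (1 + r ^ α) ^ 1 * (α * r ^ (α - 1))) r := hden.pow 2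
  have h := ((hnum.div hden2 (by positivity)).add (hden.inv hpos.ne')).const_mul 2
  refine h.congr_deriv ?_
  have e1 : r ^ (α - 1) = r ^ (α - 2) * r := by
    rw [show α - 1 = α - 2 + 1 by ring, rpow_add_one hr.ne']
  have e2 : r ^ α = r ^ (α - 2) * r * r := by
    rw [← e1, ← rpow_add_one hr.ne', sub_add_cancel]
  rw [e2] at hpos
  rw [radialProfile, e1, e2]
  field_simp
  ring

theorem radialProfile_nonpos (hα : 0 ≤ α) (hr : 0 ≤ r) : radialProfile α r ≤ 0 := by
  have hsign : (1 - r ^ α) * log r ≤ 0 := by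
    rcases le_total r 1 with h | h
    · exact mul_nonpos_of_nonneg_of_nonpos (sub_nonneg.2 (rpow_le_one hr h hα))
        (log_nonpos hr h)
    · exact mul_nonpos_of_nonpos_of_nonneg (sub_nonpos.2 (one_le_rpow h hα)) (log_nonneg h)
  have hcoeff : 0 ≤ 2 * α ^ 2 * r ^ (α - 2) / (1 + r ^ α) ^ 2 / (1 + r ^ α) := by positivity
  calc radialProfile α r
      = 2 * α ^ 2 * r ^ (α - 2) / (1 + r ^ α) ^ 2 / (1 + r ^ α) * ((1 - r ^ α) * log r) := by
        rw [radialProfile]; ring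
    _ ≤ 0 := mul_nonpos_of_nonneg_of_nonpos hcoeff hsign

theorem radialPrimitive_zero (hα : α ≠ 0) : radialPrimitive α 0 = 2 := by
  simp [radialPrimitive, zero_rpow hα]

theorem tendsto_radialPrimitive_nhdsGT_zero (hα : 0 < α) :
    Tendsto (radialPrimitive α) (𝓝[>] 0) (𝓝 2) := by
  have hpow : Tendsto (fun x : ℝ => x ^ α) (𝓝[>] 0) (𝓝 0) := by
    simpa [zero_rpow hα.ne'] using
      (continuousAt_rpow_const 0 α (Or.inr hα.le)).tendsto.mono_left nhdsWithin_le_nhds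
  have hden : Tendsto (fun x : ℝ => 1 + x ^ α) (𝓝[>] 0) (𝓝 1) := by
    simpa using hpow.const_add 1
  have hlog : Tendsto (fun x : ℝ => α * (log x * x ^ α)) (𝓝[>] 0) (𝓝 0) := by
    simpa using (tendsto_log_mul_rpow_nhdsGT_zero hα).const_mul α
  have h := ((hlog.div (hden.pow 2) (by norm_num)).add (hden.inv₀ one_ne_zero)).const_mul 2
  rw [one_pow, zero_div, zero_add, inv_one, mul_one] at h
  refine h.congr fun x => ?_
  rw [radialPrimitive, Pi.div_apply]
  ring

theorem tendsto_radialPrimitive_atTop (hα : 0 < α) :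
    Tendsto (radialPrimitive α) atTop (𝓝 0) := by
  have hden : Tendsto (fun x : ℝ => 1 + x ^ α) atTop atTop :=
    tendsto_atTop_add_const_left _ 1 (tendsto_rpow_atTop hα)
  have hinv : Tendsto (fun x : ℝ => (1 + x ^ α)⁻¹) atTop (𝓝 0) := hden.inv_tendsto_atTop
  have hratio : Tendsto (fun x : ℝ => 1 - (1 + x ^ α)⁻¹) atTop (𝓝 1) := by
    simpa using tendsto_const_nhds.sub hinv
  have hlog : Tendsto (fun x : ℝ => log x / x ^ α) atTop (𝓝 0) :=
    (isLittleO_log_rpow_atTop hα).tendsto_div_nhds_zero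
  -- `α r^α log r / (1 + r^α)² = α (log r / r^α) (r^α / (1 + r^α))²`
  have hmain : Tendsto (fun x : ℝ => α * x ^ α * log x / (1 + x ^ α) ^ 2) atTop (𝓝 0) := by
    have h := (hlog.const_mul α).mul (hratio.pow 2)
    rw [mul_zero, zero_mul] at h
    refine h.congr' ?_
    filter_upwards [eventually_gt_atTop 0] with x hx
    have hx' : x ^ α ≠ 0 := (rpow_pos_of_pos hx α).ne'
    have hpos : 0 < 1 + x ^ α := by positivity
    field_simp
    ring
  have h := (hmain.add hinv).const_mul 2
  rw [add_zero, mul_zero] at h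
  exact h

theorem integral_mul_radialProfile (hα : 0 < α) :
    ∫ r in Ioi (0 : ℝ), r * radialProfile α r = -2 := by
  have hcont : ContinuousWithinAt (radialPrimitive α) (Ici 0) 0 := by
    rw [← continuousWithinAt_Ioi_iff_Ici, ContinuousWithinAt, radialPrimitive_zero hα.ne']
    exact tendsto_radialPrimitive_nhdsGT_zero hα
  rw [integral_Ioi_of_hasDerivAt_of_nonpos hcont
    (fun r hr => hasDerivAt_radialPrimitive hr)
    (fun r hr => mul_nonpos_of_nonneg_of_nonpos hr.le (radialProfile_nonpos hα.le hr.le))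
    (tendsto_radialPrimitive_atTop hα), radialPrimitive_zero hα.ne']
  norm_num

end

theorem stmt4 (α : ℝ) (hα : 2 ≤ α) :
    ∫ y : EuclideanSpace ℝ (Fin 2),
      2 * α ^ 2 * ‖y‖ ^ (α - 2) / (1 + ‖y‖ ^ α) ^ 2 * ((1 - ‖y‖ ^ α) / (1 + ‖y‖ ^ α)) *
        Real.log ‖y‖ = -(4 * π) := by
  have h := integral_fun_norm_euclideanSpace_fin_two (radialProfile α)
  rw [integral_mul_radialProfile (by linarith)] at h
  exact h.trans (by ring)
end

section
/- For every real α ≥ 2, the function Z(y) = (1-|y|^α)/(1+|y|^α) satisfies -ΔZ = 2α² |y|^{α-2}/(1+|y|^α)² · Z on ℝ² \ {0}. -/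
/-!
`Z` is the radial function `y ↦ g (‖y‖ ^ 2)` with `g s = (1 - s ^ (α/2)) / (1 + s ^ (α/2))`.
Along a coordinate line `‖y + t • eᵢ‖ ^ 2` is a quadratic polynomial in `t`, so two applications
of the chain rule give `Δ (g ∘ ‖·‖²) = 4 (s g''(s) + g'(s))` at `s = ‖y‖ ^ 2`; working with `‖y‖ ^ 2`
rather than `‖y‖` keeps everything smooth away from `s = 0`. What remains is a rational identity in
`s ^ (α/2 - 1)` and `s ^ (α/2)`.
-/

open Real MeasureTheory

noncomputable def laplacian (f : EuclideanSpace ℝ (Fin 2) → ℝ)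
    (x : EuclideanSpace ℝ (Fin 2)) : ℝ :=
  ∑ i : Fin 2, iteratedDeriv 2 (fun t : ℝ => f (x + t • EuclideanSpace.single i (1 : ℝ))) 0

open Filter Topology

theorem iteratedDeriv_two_comp_quadratic {h h' : ℝ → ℝ} {h'' s b c : ℝ}
    (hh : ∀ᶠ u in 𝓝 s, HasDerivAt h (h' u) u) (hh' : HasDerivAt h' h'' s) :
    iteratedDeriv 2 (fun t => h (s + b * t + c * t ^ 2)) 0 = h'' * b ^ 2 + h' s * (2 * c) := by
  set q : ℝ → ℝ := fun t => s + b * t + c * t ^ 2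
  have hq : ∀ t, HasDerivAt q (b + 2 * c * t) t := fun t =>
    (((hasDerivAt_id t).const_mul b).const_add s |>.add
      ((hasDerivAt_pow 2 t).const_mul c)).congr_deriv (by ring)
  have hq0 : q 0 = s := by simp [q]
  have hq_tendsto : Tendsto q (𝓝 0) (𝓝 s) := hq0 ▸ (hq 0).continuousAt.tendsto
  have hderiv : deriv (fun t => h (q t)) =ᶠ[𝓝 0] fun t => h' (q t) * (b + 2 * c * t) :=
    (hq_tendsto.eventually hh).mono fun t ht => (ht.comp t (hq t)).deriv
  have hlin : HasDerivAt (fun t => b + 2 * c * t) (2 * c) 0 := by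
    simpa using ((hasDerivAt_id (0 : ℝ)).const_mul (2 * c)).const_add b
  have hsecond : HasDerivAt (fun t => h' (q t) * (b + 2 * c * t)) _ 0 :=
    ((hq0 ▸ hh').comp (0 : ℝ) (hq 0)).mul hlin
  rw [iteratedDeriv_succ, iteratedDeriv_one, hderiv.deriv_eq, hsecond.deriv]
  simp only [Function.comp_def, hq0]
  ring

theorem norm_add_smul_sq {E : Type*} [NormedAddCommGroup E] [InnerProductSpace ℝ E] (y v : E) (t : ℝ) :
    ‖y + t • v‖ ^ 2 = ‖y‖ ^ 2 + 2 * inner ℝ y v * t + ‖v‖ ^ 2 * t ^ 2 := by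
  rw [norm_add_sq_real, real_inner_smul_right, norm_smul, mul_pow, Real.norm_eq_abs, sq_abs]
  ring

theorem laplacian_comp_norm_sq {h h' : ℝ → ℝ} {h'' : ℝ} {y : EuclideanSpace ℝ (Fin 2)}
    (hh : ∀ᶠ u in 𝓝 (‖y‖ ^ 2), HasDerivAt h (h' u) u) (hh' : HasDerivAt h' h'' (‖y‖ ^ 2)) :
    laplacian (fun x => h (‖x‖ ^ 2)) y = 4 * (‖y‖ ^ 2 * h'' + h' (‖y‖ ^ 2)) := by
  have hline : ∀ i,
      iteratedDeriv 2 (fun t : ℝ => h (‖y + t • EuclideanSpace.single i (1 : ℝ)‖ ^ 2)) 0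
        = h'' * (2 * y i) ^ 2 + h' (‖y‖ ^ 2) * 2 := fun i => by
    simp only [norm_add_smul_sq, EuclideanSpace.inner_single_right, PiLp.norm_single]
    simpa using iteratedDeriv_two_comp_quadratic (b := 2 * y i) (c := 1) hh hh'
  simp only [laplacian, hline, Fin.sum_univ_two]
  rw [EuclideanSpace.real_norm_sq_eq, Fin.sum_univ_two]
  ring

theorem hasDerivAt_one_sub_rpow_div_one_add_rpow {β s : ℝ} (hs : 0 < s) :
    HasDerivAt (fun u => (1 - u ^ β) / (1 + u ^ β)) (-2 * β * s ^ (β - 1) / (1 + s ^ β) ^ 2) s := by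
  have hpow := Real.hasDerivAt_rpow_const (p := β) (Or.inl hs.ne')
  have hden : 1 + s ^ β ≠ 0 := by positivity
  refine (((hasDerivAt_const s 1).sub hpow).div ((hasDerivAt_const s 1).add hpow) hden).congr_deriv ?_
  simp only [Pi.add_apply, Pi.sub_apply]
  field_simp
  ring

theorem hasDerivAt_rpow_sub_one_div_one_add_rpow_sq {β s : ℝ} (hs : 0 < s) :
    HasDerivAt (fun u => -2 * β * u ^ (β - 1) / (1 + u ^ β) ^ 2)
      (-2 * β * s ^ (β - 1) * ((β - 1) * (1 + s ^ β) - 2 * β * s ^ β) / (s * (1 + s ^ β) ^ 3)) s := by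
  have hpow := Real.hasDerivAt_rpow_const (p := β) (Or.inl hs.ne')
  have hpow' := Real.hasDerivAt_rpow_const (p := β - 1) (Or.inl hs.ne')
  have hden : (1 + s ^ β) ^ 2 ≠ 0 := by positivity
  refine ((hpow'.const_mul (-2 * β)).div (((hasDerivAt_const s 1).add hpow).pow 2) hden).congr_deriv ?_
  simp only [Pi.add_apply, Pi.pow_apply]
  rw [Real.rpow_sub_one hs.ne' (β - 1), Real.rpow_sub_one hs.ne' β]
  field_simp
  ring

theorem rpow_eq_sq_rpow_div_two {r : ℝ} (hr : 0 ≤ r) (γ : ℝ) : r ^ γ = (r ^ 2) ^ (γ / 2) := by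
  rw [← Real.rpow_natCast_mul hr]
  ring_nf

theorem stmt5_general (α : ℝ)
    (Z : EuclideanSpace ℝ (Fin 2) → ℝ)
    (hZ : ∀ y, Z y = (1 - ‖y‖ ^ α) / (1 + ‖y‖ ^ α)) :
    ∀ y : EuclideanSpace ℝ (Fin 2), y ≠ 0 →
      -laplacian Z y = 2 * α ^ 2 * ‖y‖ ^ (α - 2) / (1 + ‖y‖ ^ α) ^ 2 * Z y := by
  intro y hy
  have hs : 0 < ‖y‖ ^ 2 := by positivity
  have hZ_radial : Z = fun x => (1 - (‖x‖ ^ 2) ^ (α / 2)) / (1 + (‖x‖ ^ 2) ^ (α / 2)) :=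
    funext fun x => by rw [hZ, rpow_eq_sq_rpow_div_two (norm_nonneg x)]
  have hfirst : ∀ᶠ u in 𝓝 (‖y‖ ^ 2), HasDerivAt (fun u => (1 - u ^ (α / 2)) / (1 + u ^ (α / 2)))
      (-2 * (α / 2) * u ^ (α / 2 - 1) / (1 + u ^ (α / 2)) ^ 2) u :=
    (eventually_gt_nhds hs).mono fun u hu => hasDerivAt_one_sub_rpow_div_one_add_rpow hu
  rw [hZ_radial, laplacian_comp_norm_sq hfirst (hasDerivAt_rpow_sub_one_div_one_add_rpow_sq hs),
    rpow_eq_sq_rpow_div_two (norm_nonneg y) α, rpow_eq_sq_rpow_div_two (norm_nonneg y) (α - 2),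
    show (α - 2) / 2 = α / 2 - 1 by ring]
  field_simp
  ring

theorem stmt5 (α : ℝ) (hα : 2 ≤ α)
    (Z : EuclideanSpace ℝ (Fin 2) → ℝ)
    (hZ : ∀ y, Z y = (1 - ‖y‖ ^ α) / (1 + ‖y‖ ^ α)) :
    ∀ y : EuclideanSpace ℝ (Fin 2), y ≠ 0 →
      -laplacian Z y = 2 * α ^ 2 * ‖y‖ ^ (α - 2) / (1 + ‖y‖ ^ α) ^ 2 * Z y :=
  stmt5_general α Z hZ
end
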